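/- Suppose vectors $(\Pi_i|\psi'\rangle)_{i \in I}$ realize the optimal value of the Lovász theta SDP for a weighted graph, a projection $\Pi$ commutes with every $\Pi_i$, and $\Pi\psi' \neq 0$. Then the vectors $(\Pi_i |\psi'(\Pi)\rangle)_{i \in I}$, where $|\psi'(\Pi)\rangle$ is the normalization of $\Pi|\psi'\rangle$, also realize the optimal value of the SDP. -/
import Mathlib

open scoped InnerProductSpace

lemma proj_pythagoras {H : Type*} [NormedAddCommGroup H] [InnerProductSpace ℂ H] [CompleteSpace H]
    (Q : H →L[ℂ] H) (hQ : IsIdempotentElem Q) (hQsa : IsSelfAdjoint Q) (v : H) :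
    ‖v‖ ^ 2 = ‖Q v‖ ^ 2 + ‖v - Q v‖ ^ 2 := by
  have hadj : ContinuousLinearMap.adjoint Q = Q :=
    (ContinuousLinearMap.isSelfAdjoint_iff'.mp hQsa)
  have h0 : ⟪Q v, v - Q v⟫_ℂ = 0 := by
    have : ⟪Q v, v - Q v⟫_ℂ = ⟪v, Q (v - Q v)⟫_ℂ := by
      nth_rewrite 1 [← hadj]
      exact ContinuousLinearMap.adjoint_inner_left Q (v - Q v) v
    rw [this, map_sub]
    have : Q (Q v) = Q v := by
      have := congrArg (fun T : H →L[ℂ] H => T v) hQ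
      simpa using this
    simp [this]
  have hv : v = Q v + (v - Q v) := by abel
  calc ‖v‖ ^ 2 = ‖Q v + (v - Q v)‖ ^ 2 := by rw [← hv]
    _ = ‖Q v‖ ^ 2 + 2 * (Complex.re ⟪Q v, v - Q v⟫_ℂ) + ‖v - Q v‖ ^ 2 := by
        exact norm_add_sq (𝕜 := ℂ) _ _
    _ = ‖Q v‖ ^ 2 + ‖v - Q v‖ ^ 2 := by rw [h0]; simp

theorem optimal_of_commuting_projection
    {H : Type*} [NormedAddCommGroup H] [InnerProductSpace ℂ H] [CompleteSpace H]
    {I : Type*} [Fintype I]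
    (w : I → ℝ) (hw : ∀ i, 0 < w i)
    (Adj : I → I → Prop)
    (P : I → H →L[ℂ] H)
    (hproj : ∀ i, IsIdempotentElem (P i)) (hsa : ∀ i, IsSelfAdjoint (P i))
    (horth : ∀ i j, Adj i j → P i * P j = 0)
    (θ : ℝ) (ψ : H) (hψ : ‖ψ‖ = 1)
    (hub : ∀ φ : H, ‖φ‖ = 1 → ∑ i, w i * ‖P i φ‖ ^ 2 ≤ θ)
    (hopt : ∑ i, w i * ‖P i ψ‖ ^ 2 = θ)
    (Q : H →L[ℂ] H) (hQ : IsIdempotentElem Q) (hQsa : IsSelfAdjoint Q)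
    (hcomm : ∀ i, Q * P i = P i * Q)
    (hne : Q ψ ≠ 0) :
    ∑ i, w i * ‖P i ((‖Q ψ‖)⁻¹ • Q ψ)‖ ^ 2 = θ := by
  set a : ℝ := ‖Q ψ‖ with ha
  have hapos : 0 < a := norm_pos_iff.mpr hne
  set φ : H := a⁻¹ • Q ψ with hφdef
  have hφ : ‖φ‖ = 1 := by
    rw [hφdef, norm_smul, norm_inv, Real.norm_eq_abs, abs_of_pos hapos, ← ha,
      inv_mul_cancel₀ hapos.ne']
  -- commutation pointwise
  have hcomm' : ∀ i (v : H), Q (P i v) = P i (Q v) := by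
    intro i v
    have := congrArg (fun T : H →L[ℂ] H => T v) (hcomm i)
    simpa using this
  -- splitting of each norm
  have hsplit : ∀ i, ‖P i ψ‖ ^ 2 = ‖P i (Q ψ)‖ ^ 2 + ‖P i (ψ - Q ψ)‖ ^ 2 := by
    intro i
    have := proj_pythagoras Q hQ hQsa (P i ψ)
    rw [hcomm' i ψ] at this
    have h2 : P i ψ - P i (Q ψ) = P i (ψ - Q ψ) := by rw [map_sub]
    rw [h2] at this
    exact this
  -- scaling: ‖P i (Q ψ)‖² = a² * ‖P i φ‖²
  have hscale : ∀ i, ‖P i (Q ψ)‖ ^ 2 = a ^ 2 * ‖P i φ‖ ^ 2 := by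
    intro i
    have : P i φ = a⁻¹ • P i (Q ψ) := by
      rw [hφdef, (P i).map_smul_of_tower]
    rw [this, norm_smul, norm_inv, Real.norm_eq_abs, abs_of_pos hapos]
    field_simp
  set S₁ : ℝ := ∑ i, w i * ‖P i φ‖ ^ 2 with hS₁def
  have hS₁ : S₁ ≤ θ := hub φ hφ
  set T : ℝ := ∑ i, w i * ‖P i (ψ - Q ψ)‖ ^ 2 with hTdef
  have hθsplit : θ = a ^ 2 * S₁ + T := by
    rw [← hopt, hS₁def, hTdef, Finset.mul_sum, ← Finset.sum_add_distrib]
    refine Finset.sum_congr rfl fun i _ => ?_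
    rw [hsplit i, hscale i]; ring
  -- norm of ψ - Qψ
  have hpsi : ‖ψ - Q ψ‖ ^ 2 = 1 - a ^ 2 := by
    have := proj_pythagoras Q hQ hQsa ψ
    rw [hψ, ← ha] at this
    linarith [this]
  have hθnn : 0 ≤ θ := by
    rw [← hopt]
    exact Finset.sum_nonneg fun i _ => mul_nonneg (hw i).le (by positivity)
  have hT : T ≤ (1 - a ^ 2) * θ := by
    by_cases h0 : ψ - Q ψ = 0
    · have : T = 0 := by
        rw [hTdef]
        refine Finset.sum_eq_zero fun i _ => ?_
        rw [h0]; simp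
      rw [this]
      have : (1 : ℝ) - a ^ 2 = ‖ψ - Q ψ‖ ^ 2 := hpsi.symm
      rw [h0] at this; simp at this
      rw [← this]
      nlinarith
    · set b : ℝ := ‖ψ - Q ψ‖ with hb
      have hbpos : 0 < b := norm_pos_iff.mpr h0
      have hub2 : ∑ i, w i * ‖P i (b⁻¹ • (ψ - Q ψ))‖ ^ 2 ≤ θ := by
        apply hub
        rw [norm_smul, norm_inv, Real.norm_eq_abs, abs_of_pos hbpos, ← hb,
          inv_mul_cancel₀ hbpos.ne']
      have hTscale : T = b ^ 2 * ∑ i, w i * ‖P i (b⁻¹ • (ψ - Q ψ))‖ ^ 2 := by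
        rw [hTdef, Finset.mul_sum]
        refine Finset.sum_congr rfl fun i _ => ?_
        rw [(P i).map_smul_of_tower, norm_smul, norm_inv, Real.norm_eq_abs, abs_of_pos hbpos]
        have hbne : b ≠ 0 := hbpos.ne'
        field_simp
      rw [hTscale, ← hpsi]
      have hb2 : (0:ℝ) ≤ b ^ 2 := by positivity
      calc b ^ 2 * ∑ i, w i * ‖P i (b⁻¹ • (ψ - Q ψ))‖ ^ 2 ≤ b ^ 2 * θ :=
            mul_le_mul_of_nonneg_left hub2 hb2
        _ = ‖ψ - Q ψ‖ ^ 2 * θ := by rw [hb]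
  -- conclude
  have ha2 : 0 < a ^ 2 := by positivity
  have : θ ≤ S₁ := by nlinarith [hθsplit, hT]
  have hfin : S₁ = θ := le_antisymm hS₁ this
  simpa [hS₁def, hφdef, ha] using hfin
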